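/- (Telescoping / simulation lemma.) Let M and M̂ be two MDPs sharing the state space S, action space A, bounded measurable reward r, initial distribution μ₀, and discount γ ∈ [0,1), but with possibly different Markov transition kernels T and T̂ respectively. For a policy π define G^π(s, a) := ∫_S V_M^π(s') dT̂(s'|s,a) − ∫_S V_M^π(s') dT(s'|s,a). Then for every policy π: η_{M̂}(π) − η_M(π) = γ · Σ_{t=0}^∞ γ^t E_{T̂,μ₀}^π[ G^π(s_t, a_t) ], where the expectation on the right is over trajectories generated by (μ₀, π, T̂). -/

import Mathlib

/-!
Write `V` for the value function of `π` under `T`, and `σₜ = stateDist π Th μ₀ t`,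
`ρₜ = saDist π Th t ∘ₘ μ₀` for the laws of `sₜ` and of `(sₜ, aₜ)` under `T̂ = Th`. Bellman's
equation `V(s) = E[r(s, a)] + γ E[V(s')]` (`a ~ π(·|s)`, `s' ~ T(·|s, a)`), integrated against `σₜ`,
gives `E_{ρₜ}[r] + γ E_{ρₜ}[∫ V dT] = E_{σₜ}[V]`, while `E_{ρₜ}[∫ V dT̂] = E_{σₜ₊₁}[V]`. Hence
`γ E_{ρₜ}[G] = E_{ρₜ}[r] + γ E_{σₜ₊₁}[V] - E_{σₜ}[V]`. Multiplying by `γᵗ` and summing over `t`,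
the first terms add up to `η_M̂(π)` and the last two telescope to `-E_{μ₀}[V] = -η_M(π)`.
Every function involved is bounded by `C / (1 - γ)`, which justifies all exchanges of sums and
integrals.
-/

open MeasureTheory ProbabilityTheory

variable {S A : Type*} [MeasurableSpace S] [MeasurableSpace A]

/-- Kernel sending a state `s` to the distribution of the pair `(s, a)` with `a ~ π(·|s)`. -/
noncomputable def stateAction (π : Kernel S A) [IsSFiniteKernel π] :
    Kernel S (S × A) :=
  Kernel.id ×ₖ π

/-- One step of the state-action Markov chain: from `(s, a)`, sample `s' ~ T(·|s, a)` and then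
`a' ~ π(·|s')`. -/
noncomputable def saStep (π : Kernel S A) [IsSFiniteKernel π] (T : Kernel (S × A) S) :
    Kernel (S × A) (S × A) :=
  (stateAction π) ∘ₖ T

/-- Distribution of the state-action pair `(s_t, a_t)` at time `t` as a kernel from the initial
state `s₀ = s`, for the Markov chain generated by policy `π` and dynamics `T` (the time-`t`
marginal of the Ionescu–Tulcea trajectory distribution with `a_t ~ π(·|s_t)`,
`s_{t+1} ~ T(·|s_t, a_t)`). -/
noncomputable def saDist (π : Kernel S A) [IsSFiniteKernel π] (T : Kernel (S × A) S) :
    ℕ → Kernel S (S × A)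
  | 0 => stateAction π
  | (n + 1) => (saStep π T) ∘ₖ saDist π T n

/-- The value function `V_M^π(s) = E[∑_t γ^t r(s_t, a_t)]` for trajectories started at `s`
under `(π, T)`. -/
noncomputable def value (π : Kernel S A) [IsSFiniteKernel π] (T : Kernel (S × A) S)
    (r : S × A → ℝ) (γ : ℝ) (s : S) : ℝ :=
  ∑' t : ℕ, γ ^ t * ∫ x, r x ∂(saDist π T t s)

/-- The expected return `η_M(π) = E_{s ~ μ₀}[V_M^π(s)]`. -/
noncomputable def expReturn (μ₀ : Measure S) (π : Kernel S A) [IsSFiniteKernel π]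
    (T : Kernel (S × A) S) (r : S × A → ℝ) (γ : ℝ) : ℝ :=
  ∫ s, value π T r γ s ∂μ₀

/-- The discounted expected uncertainty `ε_u(π) = ∑_t γ^t E_{T,μ₀}^π[u(s_t, a_t)]` over
trajectories generated by `(μ₀, π, T)`. -/
noncomputable def epsU (μ₀ : Measure S) (π : Kernel S A) [IsSFiniteKernel π]
    (T : Kernel (S × A) S) (u : S × A → ℝ) (γ : ℝ) : ℝ :=
  ∑' t : ℕ, γ ^ t * ∫ x, u x ∂(μ₀.bind (fun s => saDist π T t s))

section DiscountedSums

variable {γ C : ℝ}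

lemma norm_pow_mul_le_of_abs_le (hγ0 : 0 ≤ γ) {x : ℝ} (hx : |x| ≤ C) (k : ℕ) :
    ‖γ ^ k * x‖ ≤ γ ^ k * C := by
  rw [Real.norm_eq_abs, abs_mul, abs_pow, abs_of_nonneg hγ0]
  exact mul_le_mul_of_nonneg_left hx (pow_nonneg hγ0 k)

lemma summable_pow_mul_of_abs_le (hγ0 : 0 ≤ γ) (hγ1 : γ < 1) {f : ℕ → ℝ}
    (hf : ∀ k, |f k| ≤ C) : Summable fun k => γ ^ k * f k :=
  ((summable_geometric_of_lt_one hγ0 hγ1).mul_right C).of_norm_bounded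
    fun k => norm_pow_mul_le_of_abs_le hγ0 (hf k) k

lemma abs_tsum_pow_mul_le (hγ0 : 0 ≤ γ) (hγ1 : γ < 1) {f : ℕ → ℝ} (hf : ∀ k, |f k| ≤ C) :
    |∑' k, γ ^ k * f k| ≤ C / (1 - γ) := by
  rw [← inv_mul_eq_div]
  exact tsum_of_norm_bounded ((hasSum_geometric_of_lt_one hγ0 hγ1).mul_right C)
    fun k => norm_pow_mul_le_of_abs_le hγ0 (hf k) k

lemma mul_tsum_pow_mul_eq_of_step (hγ0 : 0 ≤ γ) (hγ1 : γ < 1) {D : ℝ} {e g w : ℕ → ℝ}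
    (hg : ∀ t, |g t| ≤ C) (hw : ∀ t, |w t| ≤ D)
    (hstep : ∀ t, γ * e t = g t + (γ * w (t + 1) - w t)) :
    γ * ∑' t, γ ^ t * e t = ∑' t, γ ^ t * g t - w 0 := by
  have hgs := summable_pow_mul_of_abs_le hγ0 hγ1 hg
  have hws := summable_pow_mul_of_abs_le hγ0 hγ1 hw
  have hws' : Summable fun t => γ ^ (t + 1) * w (t + 1) := (summable_nat_add_iff 1).2 hws
  calc γ * ∑' t, γ ^ t * e t
      = ∑' t, (γ ^ t * g t + (γ ^ (t + 1) * w (t + 1) - γ ^ t * w t)) := by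
        rw [← tsum_mul_left]
        refine tsum_congr fun t => ?_
        linear_combination γ ^ t * hstep t
    _ = ∑' t, γ ^ t * g t + (∑' t, γ ^ (t + 1) * w (t + 1) - ∑' t, γ ^ t * w t) := by
        rw [hgs.tsum_add (hws'.sub hws), hws'.tsum_sub hws]
    _ = ∑' t, γ ^ t * g t - w 0 := by
        rw [hws.tsum_eq_zero_add]
        ring

end DiscountedSums

section Integrals

variable {α β : Type*} [MeasurableSpace α] [MeasurableSpace β]

lemma abs_integral_le_of_abs_le {μ : Measure α} [IsProbabilityMeasure μ] {f : α → ℝ} {C : ℝ}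
    (hf : ∀ x, |f x| ≤ C) : |∫ x, f x ∂μ| ≤ C := by
  simpa using norm_integral_le_of_norm_le_const (μ := μ) (f := f) (ae_of_all _ hf)

lemma MeasureTheory.Measure.integral_bind {μ : Measure α} {κ : Kernel α β} {f : β → ℝ}
    (hf : Integrable f (κ ∘ₘ μ)) : ∫ y, f y ∂(κ ∘ₘ μ) = ∫ x, ∫ y, f y ∂κ x ∂μ := by
  rw [Measure.comp_eq_comp_const_apply] at hf ⊢
  rw [Kernel.integral_comp hf, Kernel.const_apply]

lemma integral_tsum_pow_mul {μ : Measure α} [IsProbabilityMeasure μ] {γ C : ℝ} (hγ0 : 0 ≤ γ)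
    (hγ1 : γ < 1) {f : ℕ → α → ℝ} (hf : ∀ k, AEStronglyMeasurable (f k) μ)
    (hb : ∀ k x, |f k x| ≤ C) :
    ∫ x, ∑' k, γ ^ k * f k x ∂μ = ∑' k, γ ^ k * ∫ x, f k x ∂μ := by
  have hint k : Integrable (fun x => γ ^ k * f k x) μ :=
    (Integrable.of_bound (hf k) C (ae_of_all _ (hb k))).const_mul _
  have hsum : Summable fun k => ∫ x, ‖γ ^ k * f k x‖ ∂μ :=
    ((summable_geometric_of_lt_one hγ0 hγ1).mul_right C).of_norm_bounded fun k =>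
      abs_integral_le_of_abs_le fun x => by
        simpa using norm_pow_mul_le_of_abs_le hγ0 (hb k x) k
  rw [← integral_tsum_of_summable_integral_norm hint hsum]
  simp_rw [integral_const_mul]

end Integrals

section Trajectories

variable (π : Kernel S A) [IsSFiniteKernel π] (T : Kernel (S × A) S)

lemma saDist_succ' (k : ℕ) :
    saDist π T (k + 1) = saDist π T k ∘ₖ (T ∘ₖ stateAction π) := by
  induction k with
  | zero => exact Kernel.comp_assoc _ _ _
  | succ k ih =>
    change saStep π T ∘ₖ saDist π T (k + 1) = _
    conv_lhs => rw [ih]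
    rw [← Kernel.comp_assoc]
    rfl

noncomputable def stateDist (μ₀ : Measure S) : ℕ → Measure S
  | 0 => μ₀
  | t + 1 => T ∘ₘ (saDist π T t ∘ₘ μ₀)

lemma stateAction_comp_stateDist (μ₀ : Measure S) (t : ℕ) :
    stateAction π ∘ₘ stateDist π T μ₀ t = saDist π T t ∘ₘ μ₀ := by
  cases t with
  | zero => rfl
  | succ t =>
    change stateAction π ∘ₘ (T ∘ₘ (saDist π T t ∘ₘ μ₀)) = (saStep π T ∘ₖ saDist π T t) ∘ₘ μ₀
    rw [Measure.comp_assoc, Measure.comp_assoc]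
    rfl

lemma stateDist_succ (μ₀ : Measure S) (t : ℕ) :
    stateDist π T μ₀ (t + 1) = T ∘ₘ (stateAction π ∘ₘ stateDist π T μ₀ t) := by
  rw [stateAction_comp_stateDist]
  rfl

variable {π T} {r : S × A → ℝ} {γ : ℝ}

lemma measurable_value (hr : Measurable r) : Measurable (value π T r γ) :=
  Measurable.tsum fun k =>
    ((hr.stronglyMeasurable.integral_kernel (κ := saDist π T k)).measurable).const_mul _

end Trajectories

section MarkovTrajectories

variable (π : Kernel S A) [IsMarkovKernel π] (T : Kernel (S × A) S) [IsMarkovKernel T]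

instance : IsMarkovKernel (stateAction π) := by
  unfold stateAction
  infer_instance

instance : IsMarkovKernel (saStep π T) := by
  unfold saStep
  infer_instance

instance (t : ℕ) : IsMarkovKernel (saDist π T t) := by
  induction t with
  | zero => unfold saDist; infer_instance
  | succ t ih => unfold saDist; infer_instance

instance (μ₀ : Measure S) [IsProbabilityMeasure μ₀] (t : ℕ) :
    IsProbabilityMeasure (stateDist π T μ₀ t) := by
  cases t <;> (unfold stateDist; infer_instance)

variable {π T} {r : S × A → ℝ} {γ C : ℝ}

lemma abs_value_le (hγ0 : 0 ≤ γ) (hγ1 : γ < 1) (hr : ∀ x, |r x| ≤ C) (s : S) :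
    |value π T r γ s| ≤ C / (1 - γ) :=
  abs_tsum_pow_mul_le hγ0 hγ1 fun _ => abs_integral_le_of_abs_le hr

lemma integrable_integral_value (hγ0 : 0 ≤ γ) (hγ1 : γ < 1) (hr_meas : Measurable r)
    (hr_bdd : ∀ x, |r x| ≤ C) {β : Type*} [MeasurableSpace β] (κ : Kernel β S)
    [IsMarkovKernel κ] (μ : Measure β) [IsFiniteMeasure μ] :
    Integrable (fun x => ∫ s, value π T r γ s ∂κ x) μ :=
  Integrable.of_bound
    ((measurable_value hr_meas).stronglyMeasurable.integral_kernel).aestronglyMeasurable _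
    (ae_of_all _ fun _ => abs_integral_le_of_abs_le (abs_value_le hγ0 hγ1 hr_bdd))

lemma integral_value (hγ0 : 0 ≤ γ) (hγ1 : γ < 1) (hr_meas : Measurable r)
    (hr_bdd : ∀ x, |r x| ≤ C) (ν : Measure S) [IsProbabilityMeasure ν] :
    ∫ s, value π T r γ s ∂ν = ∑' k, γ ^ k * ∫ x, r x ∂(saDist π T k ∘ₘ ν) := by
  unfold value
  rw [integral_tsum_pow_mul hγ0 hγ1 (fun k =>
      (hr_meas.stronglyMeasurable.integral_kernel (κ := saDist π T k)).aestronglyMeasurable)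
    (fun _ _ => abs_integral_le_of_abs_le hr_bdd)]
  refine tsum_congr fun k => ?_
  rw [Measure.integral_bind (Integrable.of_bound hr_meas.aestronglyMeasurable C
    (ae_of_all _ hr_bdd))]

lemma integral_value_bellman (hγ0 : 0 ≤ γ) (hγ1 : γ < 1) (hr_meas : Measurable r)
    (hr_bdd : ∀ x, |r x| ≤ C) (ν : Measure S) [IsProbabilityMeasure ν] :
    ∫ s, value π T r γ s ∂ν = ∫ x, r x ∂(stateAction π ∘ₘ ν)
      + γ * ∫ s, value π T r γ s ∂(T ∘ₘ (stateAction π ∘ₘ ν)) := by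
  rw [integral_value hγ0 hγ1 hr_meas hr_bdd, integral_value hγ0 hγ1 hr_meas hr_bdd,
    (summable_pow_mul_of_abs_le hγ0 hγ1 fun _ => abs_integral_le_of_abs_le hr_bdd).tsum_eq_zero_add,
    ← tsum_mul_left]
  simp_rw [saDist_succ', ← Measure.comp_assoc, pow_zero, one_mul, pow_succ, mul_assoc,
    mul_left_comm _ γ]
  rfl

lemma mul_integral_sub_integral_value_eq (hγ0 : 0 ≤ γ) (hγ1 : γ < 1) (hr_meas : Measurable r)
    (hr_bdd : ∀ x, |r x| ≤ C) (Th : Kernel (S × A) S) [IsMarkovKernel Th] (ν : Measure S)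
    [IsProbabilityMeasure ν] :
    γ * ∫ x, ((∫ s, value π T r γ s ∂Th x) - ∫ s, value π T r γ s ∂T x) ∂(stateAction π ∘ₘ ν)
      = ∫ x, r x ∂(stateAction π ∘ₘ ν)
        + (γ * ∫ s, value π T r γ s ∂(Th ∘ₘ (stateAction π ∘ₘ ν)) - ∫ s, value π T r γ s ∂ν) := by
  have hV (κ : Kernel (S × A) S) [IsMarkovKernel κ] :
      ∫ s, value π T r γ s ∂(κ ∘ₘ (stateAction π ∘ₘ ν))
        = ∫ x, ∫ s, value π T r γ s ∂κ x ∂(stateAction π ∘ₘ ν) :=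
    Measure.integral_bind (Integrable.of_bound (measurable_value hr_meas).aestronglyMeasurable _
      (ae_of_all _ (abs_value_le hγ0 hγ1 hr_bdd)))
  rw [integral_sub (integrable_integral_value hγ0 hγ1 hr_meas hr_bdd Th _)
      (integrable_integral_value hγ0 hγ1 hr_meas hr_bdd T _),
    integral_value_bellman hγ0 hγ1 hr_meas hr_bdd ν, hV, hV]
  ring

end MarkovTrajectories

theorem simulation_lemma
    (T Th : Kernel (S × A) S) [IsMarkovKernel T] [IsMarkovKernel Th]
    (π : Kernel S A) [IsMarkovKernel π] (μ₀ : Measure S) [IsProbabilityMeasure μ₀]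
    (r : S × A → ℝ) (hr_meas : Measurable r) (C : ℝ) (hr_bdd : ∀ x, |r x| ≤ C)
    (γ : ℝ) (hγ0 : 0 ≤ γ) (hγ1 : γ < 1) :
    expReturn μ₀ π Th r γ - expReturn μ₀ π T r γ
      = γ * ∑' t : ℕ, γ ^ t *
          ∫ x, ((∫ s', value π T r γ s' ∂(Th x)) - ∫ s', value π T r γ s' ∂(T x))
            ∂(μ₀.bind (fun s => saDist π Th t s)) := by
  set V := value π T r γ
  have hgap t : γ * ∫ x, ((∫ s', V s' ∂(Th x)) - ∫ s', V s' ∂(T x))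
        ∂(μ₀.bind (fun s => saDist π Th t s))
      = ∫ x, r x ∂(μ₀.bind (fun s => saDist π Th t s))
        + (γ * ∫ s, V s ∂stateDist π Th μ₀ (t + 1) - ∫ s, V s ∂stateDist π Th μ₀ t) := by
    rw [stateDist_succ, ← stateAction_comp_stateDist]
    exact mul_integral_sub_integral_value_eq hγ0 hγ1 hr_meas hr_bdd Th _
  rw [mul_tsum_pow_mul_eq_of_step hγ0 hγ1 (fun _ => abs_integral_le_of_abs_le hr_bdd)
    (fun _ => abs_integral_le_of_abs_le (abs_value_le hγ0 hγ1 hr_bdd)) hgap, expReturn,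
    integral_value hγ0 hγ1 hr_meas hr_bdd]
  rfl
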